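/- Let d ≥ 2 and let ℓ₁, …, ℓ_d : ℂ² → ℂ be nonzero ℂ-linear functionals that are pairwise linearly independent (so that their kernels are d distinct lines through the origin in ℂ²). Let W = {p ∈ ℂ² : ℓᵢ(p) ≠ 0 for all i = 1, …, d}. Then there exists a finite set S ⊆ ℂ of cardinality d−1 such that W is homeomorphic to ℂˣ × (ℂ ∖ S). -/

import Mathlib

/-!
Two of the functionals, `ℓ i₀` and `ℓ i₁`, are linearly independent and so serve as linear
coordinates `(u, v)` on `ℂ²`. The complement `W` is a cone inside `{u ≠ 0}`, hence
`(u, v) ↦ (u, v / u)` identifies it with `ℂˣ` times its slice `u = 1`. On that affine line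
every `ℓ i` with `i ≠ i₀` has exactly one zero, and these `d - 1` zeros are distinct because
two independent functionals on a plane have no common nonzero zero.
-/

open Module

section Dual

variable {K V : Type*} [Field K] [AddCommGroup V] [Module K V] [FiniteDimensional K V]

theorem LinearIndependent.eq_zero_of_forall_dual_apply_eq_zero {ι : Type*} [Fintype ι]
    {φ : ι → Dual K V} (hφ : LinearIndependent K φ) (hcard : Fintype.card ι = finrank K V)
    {v : V} (hv : ∀ i, φ i v = 0) : v = 0 := by
  have hspan := hφ.span_eq_top_of_card_eq_finrank' (hcard.trans Subspace.dual_finrank_eq.symm)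
  refine (forall_dual_apply_eq_zero_iff K v).mp fun ψ => ?_
  have hker : Set.range φ ⊆ LinearMap.ker (Dual.eval K V v) := by
    rintro _ ⟨i, rfl⟩
    exact hv i
  exact Submodule.span_le.mpr hker (hspan ▸ Submodule.mem_top)

theorem LinearIndependent.eq_zero_of_pair_apply_eq_zero (hV : finrank K V = 2)
    {f g : Dual K V} (hfg : LinearIndependent K ![f, g]) {v : V} (hf : f v = 0)
    (hg : g v = 0) : v = 0 :=
  hfg.eq_zero_of_forall_dual_apply_eq_zero (by simp [hV]) (Fin.forall_fin_two.mpr ⟨hf, hg⟩)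

noncomputable def linearEquivProdOfLinearIndependent (hV : finrank K V = 2)
    {f g : Dual K V} (hfg : LinearIndependent K ![f, g]) : V ≃ₗ[K] K × K :=
  (f.prod g).linearEquivOfInjective
    (injective_iff_map_eq_zero _ |>.mpr fun v hv =>
      hfg.eq_zero_of_pair_apply_eq_zero hV (congrArg Prod.fst hv) (congrArg Prod.snd hv))
    (by simp [hV])

theorem exists_finset_card_eq_forall_apply_ne_zero_iff {ι : Type*} [Fintype ι]
    (hV : finrank K V = 2) {ℓ : ι → Dual K V}
    (hind : Pairwise fun i j => LinearIndependent K ![ℓ i, ℓ j]) (i₀ : ι) {x₀ x₁ : V}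
    (h₀ : ℓ i₀ x₀ = 1) (h₁ : ℓ i₀ x₁ = 0) (hx₁ : x₁ ≠ 0) :
    ∃ S : Finset K, S.card = Fintype.card ι - 1 ∧
      ∀ t, t ∉ S ↔ ∀ i, ℓ i (x₀ + t • x₁) ≠ 0 := by
  classical
  have hslope : ∀ i ≠ i₀, ℓ i x₁ ≠ 0 := fun i hi h =>
    hx₁ ((hind hi.symm).eq_zero_of_pair_apply_eq_zero hV h₁ h)
  have hroot : ∀ i ≠ i₀, ∀ t, ℓ i (x₀ + t • x₁) = 0 ↔ t = -ℓ i x₀ / ℓ i x₁ := by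
    intro i hi t
    rw [eq_div_iff (hslope i hi), map_add, map_smul, smul_eq_mul]
    constructor <;> intro h <;> linear_combination h
  have hline : ∀ t, ℓ i₀ (x₀ + t • x₁) = 1 := fun t => by
    rw [map_add, map_smul, h₀, h₁, smul_zero, add_zero]
  have hx : ∀ t, x₀ + t • x₁ ≠ 0 := fun t h => by
    simpa [h] using hline t
  refine ⟨(Finset.univ.erase i₀).image fun i => -ℓ i x₀ / ℓ i x₁, ?_, fun t => ?_⟩
  · rw [Finset.card_image_of_injOn, Finset.card_erase_of_mem (Finset.mem_univ _),
      Finset.card_univ]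
    intro i hi j hj hij
    by_contra hne
    simp only [Finset.coe_erase, Finset.coe_univ, Set.mem_sdiff, Set.mem_univ,
      Set.mem_singleton_iff, true_and] at hi hj
    exact hx _ ((hind hne).eq_zero_of_pair_apply_eq_zero hV ((hroot i hi _).2 rfl)
      ((hroot j hj _).2 hij))
  · simp only [Finset.mem_image, Finset.mem_erase, Finset.mem_univ, and_true, not_exists,
      not_and]
    refine ⟨fun h i => ?_, fun h i hi hit => h i ((hroot i hi t).2 hit.symm)⟩
    by_cases hi : i = i₀
    · simp [hi, hline]
    · exact fun h0 => h i hi ((hroot i hi t).1 h0).symm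

end Dual

variable {K : Type*} [Field K] [TopologicalSpace K] [IsTopologicalDivisionRing K]

/-- The triviality of the Hopf bundle `K² ∖ 0 → ℙ¹` over the chart `{[u : v] | u ≠ 0}`,
restricted to a cone `C`. -/
def Homeomorph.coneNeZeroProdSlice (C : Set (K × K))
    (hsmul : ∀ u : K, u ≠ 0 → ∀ q ∈ C, u • q ∈ C) (hfst : ∀ q ∈ C, q.1 ≠ 0) :
    C ≃ₜ {u : K // u ≠ 0} × {t : K // (1, t) ∈ C} where
  toFun q := (⟨q.1.1, hfst q q.2⟩, ⟨q.1.2 / q.1.1, by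
    have h := hsmul _ (inv_ne_zero (hfst q q.2)) q q.2
    rwa [← Prod.mk.eta (p := q.1), Prod.smul_mk, smul_eq_mul, smul_eq_mul,
      inv_mul_cancel₀ (hfst q q.2), inv_mul_eq_div] at h⟩)
  invFun w := ⟨w.1.1 • (1, w.2.1), hsmul _ w.1.2 _ w.2.2⟩
  left_inv q := by ext <;> simp [mul_div_cancel₀ _ (hfst q q.2)]
  right_inv w := by ext <;> simp [w.1.2]
  continuous_toFun := by
    refine .prodMk (.subtype_mk (by fun_prop) _) (.subtype_mk ?_ _)
    exact Continuous.div (by fun_prop) (by fun_prop) fun q => hfst q q.2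
  continuous_invFun := by fun_prop

theorem stmt6_general (d : ℕ) (hd : 2 ≤ d) (ℓ : Fin d → ((Fin 2 → ℂ) →ₗ[ℂ] ℂ))
    (hind : ∀ i j, i ≠ j → LinearIndependent ℂ ![ℓ i, ℓ j]) :
    ∃ S : Finset ℂ, S.card = d - 1 ∧
      Nonempty
        ({p : Fin 2 → ℂ // ∀ i, ℓ i p ≠ 0} ≃ₜ
          ({z : ℂ // z ≠ 0} × {z : ℂ // z ∉ S})) := by
  let i₀ : Fin d := ⟨0, by omega⟩
  let i₁ : Fin d := ⟨1, by omega⟩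
  have hV : finrank ℂ (Fin 2 → ℂ) = 2 := by simp
  let e := (linearEquivProdOfLinearIndependent hV
    (hind i₀ i₁ (by simp [i₀, i₁]))).toContinuousLinearEquiv
  have he : ∀ q, ℓ i₀ (e.symm q) = q.1 := fun q => congrArg Prod.fst (e.apply_symm_apply q)
  let C : Set (ℂ × ℂ) := {q | ∀ i, ℓ i (e.symm q) ≠ 0}
  have hsmul : ∀ u : ℂ, u ≠ 0 → ∀ q ∈ C, u • q ∈ C := fun u hu q hq i => by
    simpa [map_smul, hu] using hq i
  have hfst : ∀ q ∈ C, q.1 ≠ 0 := fun q hq => he q ▸ hq i₀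
  have hline : ∀ t : ℂ, e.symm (1, t) = e.symm (1, 0) + t • e.symm (0, 1) := by
    intro t; rw [← map_smul, ← map_add]; simp
  obtain ⟨S, hcard, hS⟩ := exists_finset_card_eq_forall_apply_ne_zero_iff hV hind i₀
    (he (1, 0)) (he (0, 1)) (by simp)
  refine ⟨S, by simpa using hcard, ⟨?_⟩⟩
  exact (e.toHomeomorph.subtype (q := (· ∈ C)) fun p => by simp [C]).trans <|
    (Homeomorph.coneNeZeroProdSlice C hsmul hfst).trans <|
      (Homeomorph.refl _).prodCongr (Homeomorph.subtype (.refl _) fun t => by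
        change (∀ i, ℓ i (e.symm (1, t)) ≠ 0) ↔ t ∉ S
        rw [hline, hS])

/-- the complement `W` of a central arrangement of `d` distinct lines through
the origin of `ℂ²` is homeomorphic to `ℂˣ × (ℂ ∖ S)` for a finite set `S` of `d − 1` points. -/
theorem stmt6 (d : ℕ) (hd : 2 ≤ d) (ℓ : Fin d → ((Fin 2 → ℂ) →ₗ[ℂ] ℂ))
    (hne : ∀ i, ℓ i ≠ 0)
    (hind : ∀ i j, i ≠ j → LinearIndependent ℂ ![ℓ i, ℓ j]) :
    ∃ S : Finset ℂ, S.card = d - 1 ∧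
      Nonempty
        ({p : Fin 2 → ℂ // ∀ i, ℓ i p ≠ 0} ≃ₜ
          ({z : ℂ // z ≠ 0} × {z : ℂ // z ∉ S})) :=
  stmt6_general d hd ℓ hind
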